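/- Let A be an m×n integer matrix, and suppose the constraint matrix of the rangespace reformulation, (A; I)U with U unimodular, has columns forming an RKZ-reduced basis of L_R(A) = L((A; I)). Then the width of Q_R = { y : (ℓ_1; ℓ_2) ≤ (A; I)U y ≤ (w_1; w_2) } along e_n satisfies width(e_n, Q_R) ≤ √n · ‖(w_1; w_2) − (ℓ_1; ℓ_2)‖ / det(A Aᵀ + I)^{1/(2n)}. -/

import Mathlib

/-- The Gram-Schmidt orthogonalization of a finite family of vectors. -/
noncomputable def gsE {E : Type*} [NormedAddCommGroup E] [InnerProductSpace ℝ E] {r : ℕ}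
    (c : Fin r → E) : Fin r → E :=
  haveI : WellFoundedLT (Fin r) := inferInstance
  InnerProductSpace.gramSchmidt ℝ c

/-- The lattice generated by a family of vectors: all integer combinations. -/
noncomputable def latE {E : Type*} [NormedAddCommGroup E] [InnerProductSpace ℝ E] {r : ℕ}
    (c : Fin r → E) : AddSubgroup E :=
  AddSubgroup.closure (Set.range c)

/-- The length of a shortest nonzero vector of the lattice generated by `c`. -/
noncomputable def lambda1 {E : Type*} [NormedAddCommGroup E] [InnerProductSpace ℝ E] {r : ℕ}
    (c : Fin r → E) : ℝ :=
  sInf { t | ∃ v ∈ latE c, v ≠ 0 ∧ ‖v‖ = t }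

/-- The determinant of the lattice with basis `c` : the square root of the
Gram determinant of `c`. -/
noncomputable def latDet {E : Type*} [NormedAddCommGroup E] [InnerProductSpace ℝ E] {r : ℕ}
    (c : Fin r → E) : ℝ :=
  Real.sqrt (Matrix.det (Matrix.of fun i j : Fin r => (inner ℝ (c i) (c j) : ℝ)))

/-- Hermite's constant of rank `j`. -/
noncomputable def hermiteC (j : ℕ) : ℝ :=
  sSup { t | ∃ c : Fin j → EuclideanSpace ℝ (Fin j), LinearIndependent ℝ c ∧
    t = lambda1 c ^ 2 / latDet c ^ ((2 : ℝ) / j) }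

/-- `γ_j = max {C_1, ..., C_j}`. -/
noncomputable def gammaH (j : ℕ) : ℝ := sSup (hermiteC '' Set.Icc 1 j)

/-- Projection onto the orthogonal complement of the span of a set. -/
noncomputable def projPerp {E : Type*} [NormedAddCommGroup E] [InnerProductSpace ℝ E]
    [FiniteDimensional ℝ E] (S : Set E) (v : E) : E :=
  (Submodule.orthogonalProjectionOnto (Submodule.span ℝ S)ᗮ v : E)

/-- A family `c_0, ..., c_{r-1}` is Korkhine-Zolotarev reduced if for each `i`, the projection
`c_i(i)` of `c_i` onto the orthogonal complement of `span(c_0, ..., c_{i-1})` is a shortest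
nonzero vector of the lattice generated by the projections of the `c_j` onto that complement. -/
def KZReduced {E : Type*} [NormedAddCommGroup E] [InnerProductSpace ℝ E]
    [FiniteDimensional ℝ E] {r : ℕ} (c : Fin r → E) : Prop :=
  ∀ i : Fin r,
    ∀ v ∈ latE (fun j => projPerp (c '' { j : Fin r | j < i }) (c j)),
      v ≠ 0 → ‖projPerp (c '' { j : Fin r | j < i }) (c i)‖ ≤ ‖v‖

/-- A basis `b_0, ..., b_{r-1}` of a lattice is RKZ reduced if its reciprocal basis
(the unique family `b'` in the span with `⟨b_i, b'_j⟩ = 1` if `i + j = r + 1` (1-indexed)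
and `0` otherwise) is Korkhine-Zolotarev reduced. -/
def RKZReduced {E : Type*} [NormedAddCommGroup E] [InnerProductSpace ℝ E]
    [FiniteDimensional ℝ E] {r : ℕ} (b : Fin r → E) : Prop :=
  ∃ b' : Fin r → E,
    (∀ j, b' j ∈ Submodule.span ℝ (Set.range b)) ∧
    (∀ i j : Fin r, (inner ℝ (b i) (b' j) : ℝ) =
      if (i : ℕ) + (j : ℕ) + 1 = r then 1 else 0) ∧
    KZReduced b'

/-- The columns of a matrix with rows indexed by `ι`, as vectors in Euclidean space. -/
noncomputable def colsE' {ι : Type*} [Fintype ι] (r : ℕ) (B : Matrix ι (Fin r) ℝ) :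
    Fin r → EuclideanSpace ℝ ι :=
  fun j => (WithLp.equiv 2 (ι → ℝ)).symm fun i => B i j

/-! The reciprocal basis `b'` is, up to reversing its order, the dual basis of the columns of
`(A; I)U`, so `⟪(A; I)U y, b'₀⟫ = yₙ` and Cauchy–Schwarz gives
`width(eₙ, Q_R) ≤ ‖b'₀‖ ‖w - ℓ‖`. As `b'` is KZ reduced, `b'₀` is a shortest nonzero vector of
the dual lattice, whose Gram determinant is the inverse of `det(A Aᵀ + I)`; Minkowski's theorem
for a cube bounds that length by `√n` times the `n`-th root of the dual lattice determinant. -/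

open MeasureTheory Module Submodule Matrix
open scoped InnerProductSpace

theorem exists_ne_zero_mem_span_abs_le {ι : Type*} [Fintype ι] [DecidableEq ι] [Nonempty ι]
    (d : Basis ι ℝ (ι → ℝ)) {s : ℝ} (hs : 0 ≤ s)
    (hdet : |(Matrix.of d).det| ≤ s ^ Fintype.card ι) :
    ∃ v ∈ span ℤ (Set.range d), v ≠ 0 ∧ ∀ i, |v i| ≤ s := by
  have : Countable (span ℤ (Set.range d)).toAddSubgroup :=
    inferInstanceAs (Countable (span ℤ (Set.range d)))
  have hvol : volume (ZSpan.fundamentalDomain d) * 2 ^ finrank ℝ (ι → ℝ) ≤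
      volume (Set.univ.pi fun _ : ι => Set.Icc (-s) s) := by
    rw [ZSpan.volume_fundamentalDomain, volume_pi_pi, Module.finrank_fintype_fun_eq_card]
    simp only [Real.volume_Icc, sub_neg_eq_add, ← two_mul, Finset.prod_const, Finset.card_univ,
      ENNReal.ofReal_mul zero_le_two, ENNReal.ofReal_ofNat, mul_pow, mul_comm (2 ^ _ : ENNReal),
      ← ENNReal.ofReal_pow hs]
    gcongr
  obtain ⟨x, hx0, hx⟩ := exists_ne_zero_mem_lattice_of_measure_mul_two_pow_le_measure
    (ZSpan.isAddFundamentalDomain' d volume) (s := Set.univ.pi fun _ : ι => Set.Icc (-s) s)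
    (fun x hx i _ => by simpa [_root_.neg_le, and_comm] using hx i trivial)
    (convex_pi fun _ _ => convex_Icc _ _) (isCompact_univ_pi fun _ => isCompact_Icc) hvol
  exact ⟨x, x.2, by simpa using hx0, fun i => abs_le.2 (hx i trivial)⟩

theorem EuclideanSpace.norm_le_sqrt_card_mul {ι : Type*} [Fintype ι] {x : EuclideanSpace ℝ ι}
    {s : ℝ} (hs : 0 ≤ s) (hx : ∀ i, |x i| ≤ s) : ‖x‖ ≤ √(Fintype.card ι) * s := by
  rw [EuclideanSpace.norm_eq, ← Real.sqrt_sq hs, ← Real.sqrt_mul (Nat.cast_nonneg _)]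
  gcongr
  calc ∑ i, ‖x i‖ ^ 2 ≤ ∑ _i : ι, s ^ 2 := by
        gcongr with i; rw [Real.norm_eq_abs]; exact hx i
    _ = _ := by simp

theorem exists_ne_zero_mem_span_norm_le {ι : Type*} [Fintype ι] [DecidableEq ι] [Nonempty ι]
    (d : Basis ι ℝ (ι → ℝ)) :
    ∃ v ∈ span ℤ (Set.range d), v ≠ 0 ∧
      ‖WithLp.toLp 2 v‖ ≤ √(Fintype.card ι) * |(Matrix.of d).det| ^ (Fintype.card ι : ℝ)⁻¹ := by
  have hs : 0 ≤ |(Matrix.of d).det| ^ (Fintype.card ι : ℝ)⁻¹ := by positivity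
  obtain ⟨v, hv, hv0, hvs⟩ := exists_ne_zero_mem_span_abs_le d hs
    (Real.rpow_inv_natCast_pow (abs_nonneg _) Fintype.card_ne_zero).ge
  exact ⟨v, hv, hv0, EuclideanSpace.norm_le_sqrt_card_mul hs hvs⟩

theorem mem_latE_iff_mem_span_int {E : Type*} [NormedAddCommGroup E] [InnerProductSpace ℝ E]
    {r : ℕ} {c : Fin r → E} {v : E} : v ∈ latE c ↔ v ∈ span ℤ (Set.range c) := by
  rw [latE, ← span_int_eq_addSubgroupClosure, mem_toAddSubgroup]

theorem exists_ne_zero_mem_latE_norm_le {E : Type*} [NormedAddCommGroup E]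
    [InnerProductSpace ℝ E] {n : ℕ} {c : Fin (n + 1) → E} (hc : LinearIndependent ℝ c) :
    ∃ v ∈ latE c, v ≠ 0 ∧ ‖v‖ ≤ √(n + 1 : ℝ) * (gram ℝ c).det ^ ((1 : ℝ) / (2 * (n + 1))) := by
  set F := span ℝ (Set.range c)
  have : FiniteDimensional ℝ F := .span_of_finite ℝ (Set.finite_range c)
  have hF : finrank ℝ F = n + 1 := by rw [finrank_span_eq_card hc, Fintype.card_fin]
  let o : OrthonormalBasis (Fin (n + 1)) ℝ F := (stdOrthonormalBasis ℝ F).reindex (finCongr hF)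
  let e : F ≃ₗ[ℝ] (Fin (n + 1) → ℝ) :=
    o.repr.toLinearEquiv.trans (WithLp.linearEquiv 2 ℝ (Fin (n + 1) → ℝ))
  let d : Basis (Fin (n + 1)) ℝ (Fin (n + 1) → ℝ) := (Basis.span hc).map e
  have hgram : gram ℝ c = Matrix.of d * (Matrix.of d)ᵀ := by
    have : gram ℝ c = gram ℝ (Basis.span hc) := by
      ext i j
      simp [gram_apply, Basis.span_apply]
    rw [this, gram_eq_conjTranspose_mul o]
    ext i j
    simp [mul_apply, d, e]
  have hdet : (gram ℝ c).det ^ ((1 : ℝ) / (2 * (n + 1))) =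
      |(Matrix.of d).det| ^ ((n + 1 : ℕ) : ℝ)⁻¹ := by
    rw [hgram, det_mul, det_transpose, ← sq, ← sq_abs, ← Real.rpow_natCast,
      ← Real.rpow_mul (abs_nonneg _)]
    congr 1
    push_cast
    field_simp
  obtain ⟨v, hv, hv0, hvle⟩ := exists_ne_zero_mem_span_norm_le d
  refine ⟨e.symm v, ?_, by simpa using hv0, ?_⟩
  · let f : (Fin (n + 1) → ℝ) →ₗ[ℤ] E := (F.subtype ∘ₗ e.symm.toLinearMap).restrictScalars ℤ
    have hfd : f ∘ d = c := funext fun j => by simp [f, d, Basis.span_apply]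
    have := mem_map_of_mem (f := f) hv
    rwa [map_span, ← Set.range_comp, hfd, ← mem_latE_iff_mem_span_int] at this
  · rw [hdet]
    calc ‖(e.symm v : E)‖ = ‖WithLp.toLp 2 v‖ := (norm_coe _).trans (o.repr.symm.norm_map _)
      _ ≤ _ := by simpa using hvle

theorem det_gram_mul_det_gram_eq_one_of_inner_eq_ite {E : Type*} [NormedAddCommGroup E]
    [InnerProductSpace ℝ E] {ι : Type*} [Fintype ι] [DecidableEq ι] {b b' : ι → E}
    (hspan : ∀ j, b' j ∈ span ℝ (Set.range b))
    (hinner : ∀ i j, ⟪b i, b' j⟫_ℝ = if i = j then 1 else 0) :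
    (gram ℝ b').det * (gram ℝ b).det = 1 := by
  choose M hM using fun j => (mem_span_range_iff_exists_fun ℝ).1 (hspan j)
  have hgram' : gram ℝ b' = Matrix.of M := by
    ext i j
    rw [gram_apply, ← hM i, sum_inner]
    simp [real_inner_smul_left, hinner]
  have hdual : gram ℝ b * (Matrix.of M)ᵀ = 1 := by
    ext i j
    simp [mul_apply, gram_apply, ← hinner i j, ← hM j, inner_sum, real_inner_smul_right, mul_comm,
      one_apply]
  rw [hgram', ← det_transpose, mul_comm, ← det_mul, hdual, det_one]

theorem det_gram_mul_det_gram_eq_one_of_inner_eq_rev {E : Type*} [NormedAddCommGroup E]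
    [InnerProductSpace ℝ E] {r : ℕ} {b b' : Fin r → E}
    (hspan : ∀ j, b' j ∈ span ℝ (Set.range b))
    (hinner : ∀ i j : Fin r, ⟪b i, b' j⟫_ℝ = if (i : ℕ) + (j : ℕ) + 1 = r then 1 else 0) :
    (gram ℝ b').det * (gram ℝ b).det = 1 := by
  have hrev : ∀ i j : Fin r, (i : ℕ) + (Fin.rev j : ℕ) + 1 = r ↔ i = j := fun i j => by
    rw [Fin.val_rev, Fin.ext_iff]; omega
  have := det_gram_mul_det_gram_eq_one_of_inner_eq_ite (b' := b' ∘ Fin.rev) (fun j => hspan _)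
    fun i j => by simp only [Function.comp_apply, hinner, hrev]
  rwa [show gram ℝ (b' ∘ Fin.rev) = (gram ℝ b').submatrix Fin.revPerm Fin.revPerm from rfl,
    det_submatrix_equiv_self] at this

theorem KZReduced.norm_zero_le {E : Type*} [NormedAddCommGroup E] [InnerProductSpace ℝ E]
    [FiniteDimensional ℝ E] {n : ℕ} {c : Fin (n + 1) → E} (hc : KZReduced c) {v : E}
    (hv : v ∈ latE c) (hv0 : v ≠ 0) : ‖c 0‖ ≤ ‖v‖ := by
  have hproj : ∀ x, projPerp (c '' {j | j < 0}) x = x := fun x => by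
    simp [projPerp, starProjection_top]
  have h0 := hc 0 v
  simp only [hproj] at h0
  exact h0 hv hv0

theorem norm_zero_le_of_inner_eq_rev_of_kzReduced {E : Type*} [NormedAddCommGroup E]
    [InnerProductSpace ℝ E] [FiniteDimensional ℝ E] {n : ℕ} {b b' : Fin (n + 1) → E}
    (hspan : ∀ j, b' j ∈ span ℝ (Set.range b))
    (hinner : ∀ i j : Fin (n + 1), ⟪b i, b' j⟫_ℝ = if (i : ℕ) + (j : ℕ) + 1 = n + 1 then 1 else 0)
    (hKZ : KZReduced b') :
    ‖b' 0‖ ≤ √(n + 1) / (gram ℝ b).det ^ ((1 : ℝ) / (2 * (n + 1))) := by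
  have hdual := det_gram_mul_det_gram_eq_one_of_inner_eq_rev hspan hinner
  have hb' : LinearIndependent ℝ b' :=
    linearIndependent_of_det_gram_ne_zero (left_ne_zero_of_mul_eq_one hdual)
  have hdet : 0 ≤ (gram ℝ b).det :=
    (pos_of_mul_pos_right (hdual ▸ one_pos) (posDef_gram_of_linearIndependent hb').det_pos.le).le
  obtain ⟨v, hv, hv0, hvle⟩ := exists_ne_zero_mem_latE_norm_le hb'
  rw [eq_inv_of_mul_eq_one_left hdual, Real.inv_rpow hdet, ← div_eq_mul_inv] at hvle
  exact (hKZ.norm_zero_le hv hv0).trans hvle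

theorem gram_colsE' {ι : Type*} [Fintype ι] {r : ℕ} (B : Matrix ι (Fin r) ℝ) :
    gram ℝ (colsE' r B) = Bᵀ * B := by
  ext i j
  simp [gram_apply, colsE', mul_apply, PiLp.inner_apply, mul_comm]

theorem det_transpose_mul_fromRows_one_mul {m n : Type*} [Fintype m] [Fintype n] [DecidableEq m]
    [DecidableEq n] (A : Matrix m n ℤ) (U : Matrix n n ℤ) (hU : IsUnit U.det) :
    ((fromRows A (1 : Matrix n n ℤ) * U)ᵀ * (fromRows A (1 : Matrix n n ℤ) * U)).det =
      (A * Aᵀ + 1).det := by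
  have hB : (fromRows A (1 : Matrix n n ℤ))ᵀ * fromRows A (1 : Matrix n n ℤ) = Aᵀ * A + 1 := by
    rw [transpose_fromRows, transpose_one, fromCols_mul_fromRows, Matrix.one_mul]
  rw [transpose_mul, Matrix.mul_assoc, ← Matrix.mul_assoc (fromRows A 1)ᵀ, hB, det_mul, det_mul,
    det_transpose, det_mul_add_one_comm, mul_left_comm, Int.isUnit_mul_self hU, mul_one]

theorem inner_toLp_mulVec {ι : Type*} [Fintype ι] {r : ℕ} (B : Matrix ι (Fin r) ℝ)
    (x : Fin r → ℝ) (u : EuclideanSpace ℝ ι) :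
    ⟪WithLp.toLp 2 (B *ᵥ x), u⟫_ℝ = ∑ j, x j * ⟪colsE' r B j, u⟫_ℝ := by
  simp only [PiLp.inner_apply, colsE', mulVec, dotProduct, Finset.mul_sum]
  rw [Finset.sum_comm]
  simp [Finset.mul_sum, mul_comm, mul_left_comm, mul_assoc]

theorem EuclideanSpace.norm_sub_le_of_forall_mem_Icc {ι : Type*} [Fintype ι]
    {x y ℓ w : EuclideanSpace ℝ ι} (hx : ∀ i, x i ∈ Set.Icc (ℓ i) (w i))
    (hy : ∀ i, y i ∈ Set.Icc (ℓ i) (w i)) : ‖x - y‖ ≤ ‖w - ℓ‖ := by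
  rw [EuclideanSpace.norm_eq, EuclideanSpace.norm_eq]
  gcongr with i
  simp only [PiLp.sub_apply, Real.norm_eq_abs]
  exact (abs_sub_le_of_le_of_le (hx i).1 (hx i).2 (hy i).1 (hy i).2).trans (le_abs_self _)

theorem sub_le_norm_sub_mul_norm_of_inner_colsE'_eq_ite {ι : Type*} [Fintype ι] {r : ℕ}
    {B : Matrix ι (Fin r) ℝ} {u : EuclideanSpace ℝ ι} {k : Fin r}
    (hu : ∀ j, ⟪colsE' r B j, u⟫_ℝ = if j = k then 1 else 0) {ℓ w : EuclideanSpace ℝ ι}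
    {y₁ y₂ : Fin r → ℝ} (hy₁ : ∀ i, ℓ i ≤ (B *ᵥ y₁) i ∧ (B *ᵥ y₁) i ≤ w i)
    (hy₂ : ∀ i, ℓ i ≤ (B *ᵥ y₂) i ∧ (B *ᵥ y₂) i ≤ w i) :
    y₁ k - y₂ k ≤ ‖w - ℓ‖ * ‖u‖ :=
  calc y₁ k - y₂ k = ⟪WithLp.toLp 2 (B *ᵥ (y₁ - y₂)), u⟫_ℝ := by simp [inner_toLp_mulVec, hu]
    _ ≤ ‖WithLp.toLp 2 (B *ᵥ (y₁ - y₂))‖ * ‖u‖ := real_inner_le_norm _ _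
    _ ≤ ‖w - ℓ‖ * ‖u‖ := by
      rw [mulVec_sub, WithLp.toLp_sub]
      gcongr
      exact EuclideanSpace.norm_sub_le_of_forall_mem_Icc hy₁ hy₂

theorem Real.sSup_sub_sInf_le {S : Set ℝ} {K : ℝ} (hK : 0 ≤ K)
    (h : ∀ a ∈ S, ∀ b ∈ S, a - b ≤ K) : sSup S - sInf S ≤ K := by
  have hdist : ∀ a ∈ S, ∀ b ∈ S, dist a b ≤ K := fun a ha b hb =>
    abs_sub_le_iff.2 ⟨h a ha b hb, h b hb a ha⟩
  rw [← Real.diam_eq (Metric.isBounded_iff.2 ⟨K, hdist⟩)]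
  exact Metric.diam_le_of_forall_dist_le hK hdist

theorem rangespace_width_bound_general (m n : ℕ) (A : Matrix (Fin m) (Fin (n + 1)) ℤ)
    (U : Matrix (Fin (n + 1)) (Fin (n + 1)) ℤ) (hU : IsUnit U.det)
    (C : Matrix (Fin m ⊕ Fin (n + 1)) (Fin (n + 1)) ℝ)
    (hC : C = (Matrix.fromRows A (1 : Matrix (Fin (n + 1)) (Fin (n + 1)) ℤ) * U).map
      (Int.cast : ℤ → ℝ))
    (hrkz : RKZReduced (colsE' (n + 1) C))
    (ℓ w : EuclideanSpace ℝ (Fin m ⊕ Fin (n + 1)))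
    (Q : Set (Fin (n + 1) → ℝ))
    (hQ : Q = { y | ∀ i, ℓ i ≤ C.mulVec y i ∧ C.mulVec y i ≤ w i }) :
    sSup ((fun y => y (Fin.last n)) '' Q) - sInf ((fun y => y (Fin.last n)) '' Q)
      ≤ Real.sqrt (n + 1) * ‖w - ℓ‖ /
        (((A * A.transpose + 1).det : ℝ)) ^ ((1 : ℝ) / (2 * (n + 1))) := by
  obtain ⟨b', hspan, hinner, hKZ⟩ := hrkz
  have hgram : (gram ℝ (colsE' (n + 1) C)).det = ((A * A.transpose + 1).det : ℝ) := by
    rw [gram_colsE', hC, ← det_transpose_mul_fromRows_one_mul A U hU, Int.cast_det]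
    congr 1
    ext i j
    simp [mul_apply]
  have hb'0 := norm_zero_le_of_inner_eq_rev_of_kzReduced hspan hinner hKZ
  rw [hgram] at hb'0
  have hlast : ∀ j : Fin (n + 1), ⟪colsE' (n + 1) C j, b' 0⟫_ℝ = if j = Fin.last n then 1 else 0 :=
    fun j => by simp [hinner, Fin.ext_iff]
  calc _ ≤ ‖w - ℓ‖ * ‖b' 0‖ := by
        refine Real.sSup_sub_sInf_le (by positivity) ?_
        rintro _ ⟨y₁, hy₁, rfl⟩ _ ⟨y₂, hy₂, rfl⟩
        rw [hQ] at hy₁ hy₂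
        exact sub_le_norm_sub_mul_norm_of_inner_colsE'_eq_ite hlast hy₁ hy₂
    _ ≤ ‖w - ℓ‖ * (√(n + 1) / _) := mul_le_mul_of_nonneg_left hb'0 (norm_nonneg _)
    _ = _ := by ring

/-- if the columns of `(A; I)U` (with `U` unimodular) form an RKZ-reduced basis
of `L_R(A)`, then the width of `Q_R = {y : ℓ ≤ (A; I)U y ≤ w}` along the last unit vector is
at most `√n ‖w - ℓ‖ / det(A Aᵀ + I)^{1/(2n)}`. Here `n` is `n + 1`. -/
theorem rangespace_width_bound (m n : ℕ) (A : Matrix (Fin m) (Fin (n + 1)) ℤ)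
    (U : Matrix (Fin (n + 1)) (Fin (n + 1)) ℤ) (hU : IsUnit U.det)
    (C : Matrix (Fin m ⊕ Fin (n + 1)) (Fin (n + 1)) ℝ)
    (hC : C = (Matrix.fromRows A (1 : Matrix (Fin (n + 1)) (Fin (n + 1)) ℤ) * U).map
      (Int.cast : ℤ → ℝ))
    (hindep : LinearIndependent ℝ (colsE' (n + 1) C))
    (hrkz : RKZReduced (colsE' (n + 1) C))
    (ℓ w : EuclideanSpace ℝ (Fin m ⊕ Fin (n + 1)))
    (Q : Set (Fin (n + 1) → ℝ))
    (hQ : Q = { y | ∀ i, ℓ i ≤ C.mulVec y i ∧ C.mulVec y i ≤ w i })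
    (hne : Q.Nonempty)
    (hba : BddAbove ((fun y => y (Fin.last n)) '' Q))
    (hbb : BddBelow ((fun y => y (Fin.last n)) '' Q)) :
    sSup ((fun y => y (Fin.last n)) '' Q) - sInf ((fun y => y (Fin.last n)) '' Q)
      ≤ Real.sqrt (n + 1) * ‖w - ℓ‖ /
        (((A * A.transpose + 1).det : ℝ)) ^ ((1 : ℝ) / (2 * (n + 1))) :=
  rangespace_width_bound_general m n A U hU C hC hrkz ℓ w Q hQ
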